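/- Removing a block (the contiguous subsequence from some order's pickup to its own delivery, together with all events in between) from a route satisfying the LIFO and capacity constraints yields a route that again satisfies the LIFO and capacity constraints, provided the block is well-formed, i.e., every order with an event inside the block has both its pickup and delivery inside the block. -/

import Mathlib

/-- The LIFO (non-crossing) condition for a route given as a list of events
`(order, isPickup)`. -/
def LIFOCond {β : Type*} [DecidableEq β] (r : List (β × Bool)) : Prop :=
  ∀ i j : β, r.idxOf (i, true) < r.idxOf (j, true) →
    r.idxOf (i, false) ≤ r.idxOf (j, true) ∨
    r.idxOf (j, false) ≤ r.idxOf (i, false)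

/-- The load after the length-`p` prefix of route `r`. -/
def prefLoad {β : Type*} (q : β → ℝ) (r : List (β × Bool)) (p : ℕ) : ℝ :=
  ((r.take p).map (fun e => if e.2 then q e.1 else -q e.1)).sum

/-- The capacity constraint: every prefix load is at most `Q`. -/
def CapacityOK {β : Type*} (q : β → ℝ) (r : List (β × Bool)) (Q : ℝ) : Prop :=
  ∀ p : ℕ, prefLoad q r p ≤ Q

/-!
Since the route lists every event exactly once, it is duplicate-free, and deleting events keeps
the relative order of the remaining ones; a well-formed block holds the partner of each of its
events, so the shortened route still contains each pickup together with its delivery and the LIFO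
condition transfers. The pickups and deliveries inside the block cancel, so every prefix load of
the shortened route is a prefix load of the original one.
-/

namespace List

variable {α : Type*} {l l' : List α} {x y : α}

theorem take_append_drop_take_append_drop {m n : ℕ} (h : m ≤ n) (l : List α) :
    l.take m ++ (l.take n).drop m ++ l.drop n = l := by
  conv_rhs => rw [← take_append_drop n l, ← take_append_drop m (l.take n), take_take,
    Nat.min_eq_left h]

theorem Nodup.mem_append_iff_notMem_middle {l₁ l₂ l₃ : List α} (h : (l₁ ++ l₂ ++ l₃).Nodup)
    (hx : x ∈ l₁ ++ l₂ ++ l₃) : x ∈ l₁ ++ l₃ ↔ x ∉ l₂ := by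
  simp only [nodup_append, mem_append] at h hx ⊢
  grind

section idxOf

variable [BEq α] [LawfulBEq α]

theorem Nodup.mem_drop_iff_le_idxOf (hl : l.Nodup) (hx : x ∈ l) {n : ℕ} :
    x ∈ l.drop n ↔ n ≤ l.idxOf x := by
  have hsplit := take_append_drop n l
  rw [← hsplit, nodup_append] at hl
  rw [← not_lt, ← mem_take_iff_idxOf_lt hx]
  refine ⟨fun hd ht => hl.2.2 x ht x hd rfl, fun ht => ?_⟩
  rw [← hsplit, mem_append] at hx
  exact hx.resolve_left ht

theorem Nodup.mem_drop_take_iff (hl : l.Nodup) (hx : x ∈ l) {m n : ℕ} :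
    x ∈ (l.take n).drop m ↔ m ≤ l.idxOf x ∧ l.idxOf x < n := by
  by_cases hxn : x ∈ l.take n
  · rw [(hl.sublist (take_sublist n l)).mem_drop_iff_le_idxOf hxn,
      (take_prefix n l).idxOf_eq_of_mem hxn, ← mem_take_iff_idxOf_lt hx]
    simp [hxn]
  · rw [mem_take_iff_idxOf_lt hx] at hxn
    exact ⟨fun h => absurd (mem_of_mem_drop h) ((mem_take_iff_idxOf_lt hx).not.2 hxn),
      fun h => absurd h.2 hxn⟩

theorem Sublist.idxOf_le_idxOf_iff (h : l' <+ l) (hl : l.Nodup) (hx : x ∈ l') (hy : y ∈ l') :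
    l'.idxOf x ≤ l'.idxOf y ↔ l.idxOf x ≤ l.idxOf y := by
  obtain ⟨f, hf⟩ := sublist_iff_exists_fin_orderEmbedding_get_eq.1 h
  have key : ∀ z (hz : z ∈ l'), l.idxOf z = f ⟨l'.idxOf z, idxOf_lt_length_of_mem hz⟩ := by
    intro z hz
    conv_lhs => rw [← idxOf_get (idxOf_lt_length_of_mem hz), hf]
    exact hl.idxOf_getElem _ _
  rw [key x hx, key y hy, ← Fin.le_def, f.le_iff_le, Fin.le_def]

theorem Sublist.idxOf_lt_idxOf_iff (h : l' <+ l) (hl : l.Nodup) (hx : x ∈ l') (hy : y ∈ l') :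
    l'.idxOf x < l'.idxOf y ↔ l.idxOf x < l.idxOf y := by
  simp only [← not_le, h.idxOf_le_idxOf_iff hl hy hx]

end idxOf

end List

section Route

variable {β : Type*}

def loadChange (q : β → ℝ) (e : β × Bool) : ℝ := if e.2 then q e.1 else -q e.1

theorem prefLoad_eq_sum_map_loadChange (q : β → ℝ) (r : List (β × Bool)) (p : ℕ) :
    prefLoad q r p = ((r.take p).map (loadChange q)).sum := rfl

def partner (e : β × Bool) : β × Bool := (e.1, !e.2)

theorem partner_involutive : Function.Involutive (partner : β × Bool → β × Bool) := by
  rintro ⟨a, b⟩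
  simp [partner]

theorem loadChange_partner (q : β → ℝ) (e : β × Bool) :
    loadChange q (partner e) = -loadChange q e := by
  rcases e with ⟨a, _ | _⟩ <;> simp [loadChange, partner]

theorem sum_map_loadChange_eq_zero (q : β → ℝ) {l : List (β × Bool)} (hl : l.Nodup)
    (hclosed : ∀ e ∈ l, partner e ∈ l) : (l.map (loadChange q)).sum = 0 := by
  have hperm : l.map partner |>.Perm l := by
    refine (List.perm_ext_iff_of_nodup (hl.map partner_involutive.injective) hl).2 fun e => ?_
    rw [List.mem_map]
    exact ⟨fun ⟨e', he', he⟩ => he ▸ hclosed e' he',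
      fun he => ⟨partner e, hclosed e he, partner_involutive e⟩⟩
  have hneg : (l.map (loadChange q)).sum = -(l.map (loadChange q)).sum := by
    conv_lhs => rw [← (hperm.map (loadChange q)).sum_eq]
    simp only [List.map_map, Function.comp_def, loadChange_partner]
    simpa using Multiset.sum_map_neg (m := (l : Multiset (β × Bool))) (f := loadChange q)
  linarith

theorem CapacityOK.of_sum_map_loadChange_eq_zero {q : β → ℝ} {l₁ l₂ l₃ : List (β × Bool)}
    {Q : ℝ} (h : CapacityOK q (l₁ ++ l₂ ++ l₃) Q) (h₂ : (l₂.map (loadChange q)).sum = 0) :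
    CapacityOK q (l₁ ++ l₃) Q := by
  intro p
  rcases le_or_gt p l₁.length with hp | hp
  · have := h p
    rwa [prefLoad, List.append_assoc, List.take_append_of_le_length hp,
      ← List.take_append_of_le_length hp] at this
  · obtain ⟨k, rfl⟩ := Nat.exists_eq_add_of_le hp.le
    have hshift : l₁.length + k + l₂.length = (l₁ ++ l₂).length + k := by
      rw [List.length_append]; omega
    have := h (l₁.length + k + l₂.length)
    rw [prefLoad_eq_sum_map_loadChange, hshift, List.take_length_add_append] at this
    rw [prefLoad_eq_sum_map_loadChange, List.take_length_add_append]
    simpa only [List.map_append, List.sum_append, h₂, add_zero] using this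

theorem LIFOCond.of_sublist [DecidableEq β] {l l' : List (β × Bool)} (h : LIFOCond l)
    (hsub : l'.Sublist l) (hl : l.Nodup) (hclosed : ∀ a, (a, true) ∈ l' → (a, false) ∈ l') :
    LIFOCond l' := by
  intro i j hij
  have hi : (i, true) ∈ l' := List.idxOf_lt_length_iff.1 (hij.trans_le List.idxOf_le_length)
  by_cases hj : (j, true) ∈ l'
  · rcases h i j ((hsub.idxOf_lt_idxOf_iff hl hi hj).1 hij) with hle | hle
    · exact .inl ((hsub.idxOf_le_idxOf_iff hl (hclosed i hi) hj).2 hle)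
    · exact .inr ((hsub.idxOf_le_idxOf_iff hl (hclosed j hj) (hclosed i hi)).2 hle)
  · exact .inl (List.idxOf_of_notMem hj ▸ List.idxOf_le_length)

end Route

theorem stmt_7_general {α : Type*} [DecidableEq α] (q : α → ℝ) (route : List (α × Bool))
    (h_pick : ∀ o : α, route.count (o, true) = 1)
    (h_del : ∀ o : α, route.count (o, false) = 1)
    (h_ord : ∀ o : α, route.idxOf (o, true) < route.idxOf (o, false))
    (Q : ℝ) (h_lifo : LIFOCond route) (hcap : CapacityOK q route Q)
    (o : α)
    (h_wf : ∀ a : α, ∀ b : Bool,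
      route.idxOf (o, true) ≤ route.idxOf (a, b) →
      route.idxOf (a, b) ≤ route.idxOf (o, false) →
      route.idxOf (o, true) ≤ route.idxOf (a, !b) ∧
      route.idxOf (a, !b) ≤ route.idxOf (o, false)) :
    LIFOCond (route.take (route.idxOf (o, true)) ++
        route.drop (route.idxOf (o, false) + 1)) ∧
    CapacityOK q (route.take (route.idxOf (o, true)) ++
        route.drop (route.idxOf (o, false) + 1)) Q := by
  have hcount : ∀ x : α × Bool, route.count x = 1 := by
    rintro ⟨a, _ | _⟩
    exacts [h_del a, h_pick a]
  have hnodup : route.Nodup := List.nodup_iff_count_le_one.2 fun x => (hcount x).le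
  have hmem : ∀ x, x ∈ route := fun x => List.count_pos_iff.1 (by rw [hcount x]; exact one_pos)
  set block := (route.take (route.idxOf (o, false) + 1)).drop (route.idxOf (o, true))
  have hmem_block : ∀ x, x ∈ block ↔
      route.idxOf (o, true) ≤ route.idxOf x ∧ route.idxOf x ≤ route.idxOf (o, false) := by
    intro x
    rw [hnodup.mem_drop_take_iff (hmem x), Nat.lt_succ_iff]
  have hblock_closed : ∀ x ∈ block, partner x ∈ block := fun x hx =>
    (hmem_block _).2 (h_wf x.1 x.2 ((hmem_block x).1 hx).1 ((hmem_block x).1 hx).2)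
  have hblock_nodup : block.Nodup :=
    hnodup.sublist ((List.drop_sublist _ _).trans (List.take_sublist _ _))
  set before := route.take (route.idxOf (o, true))
  set after := route.drop (route.idxOf (o, false) + 1)
  have hsplit : before ++ block ++ after = route :=
    route.take_append_drop_take_append_drop ((h_ord o).le.trans (Nat.le_succ _))
  have hmem_split : ∀ x, x ∈ before ++ block ++ after := fun x => hsplit ▸ hmem x
  have hnodup_split : (before ++ block ++ after).Nodup := hsplit ▸ hnodup
  refine ⟨LIFOCond.of_sublist (hsplit ▸ h_lifo) ((List.sublist_append_left _ _).append_right _)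
    hnodup_split fun a ha => ?_,
    CapacityOK.of_sum_map_loadChange_eq_zero (hsplit ▸ hcap)
      (sum_map_loadChange_eq_zero q hblock_nodup hblock_closed)⟩
  rw [hnodup_split.mem_append_iff_notMem_middle (hmem_split _)] at ha ⊢
  exact fun hb => ha (hblock_closed _ hb)

/-- Removing a block (the contiguous subsequence from order `o`'s pickup to
its own delivery, with all events in between) from a route satisfying the LIFO and
capacity constraints yields a route again satisfying the LIFO and capacity constraints,
provided the block is well-formed: every order with an event inside the block has both
its pickup and its delivery inside the block. -/
theorem stmt_7 {α : Type*} [DecidableEq α] (q : α → ℝ) (hq : ∀ o, 0 < q o)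
    (route : List (α × Bool))
    (h_pick : ∀ o : α, route.count (o, true) = 1)
    (h_del : ∀ o : α, route.count (o, false) = 1)
    (h_ord : ∀ o : α, route.idxOf (o, true) < route.idxOf (o, false))
    (Q : ℝ) (h_lifo : LIFOCond route) (hcap : CapacityOK q route Q)
    (o : α)
    (h_wf : ∀ a : α, ∀ b : Bool,
      route.idxOf (o, true) ≤ route.idxOf (a, b) →
      route.idxOf (a, b) ≤ route.idxOf (o, false) →
      route.idxOf (o, true) ≤ route.idxOf (a, !b) ∧
      route.idxOf (a, !b) ≤ route.idxOf (o, false)) :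
    LIFOCond (route.take (route.idxOf (o, true)) ++
        route.drop (route.idxOf (o, false) + 1)) ∧
    CapacityOK q (route.take (route.idxOf (o, true)) ++
        route.drop (route.idxOf (o, false) + 1)) Q :=
  stmt_7_general q route h_pick h_del h_ord Q h_lifo hcap o h_wf
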